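/- arXiv:math-ph/0404069 — 4 statements merged into one kernel-verified Lean document; each statement's English description precedes it below -/
import Mathlib

section
/- Let y₀ ∈ (0, π) and set c₃ = π² · min{y₀^{−2}, (π − y₀)^{−2}} − 1. Then for every v ∈ H^1(0, π) with v(y₀) = 0, one has ∫₀^π |v(y)|² sin² y dy ≤ c₃^{−1} ∫₀^π |v'(y)|² sin² y dy. -/
open MeasureTheory Real

/-!
Let `0 ≤ a < b ≤ π` and `β = π / (b - a)`. The function `u₀ x = sin (β (x - a)) / sin x` is positive
on `(a, b)` and solves `-(sin² u')' = (β² - 1) sin² u`. Picone's identity for its logarithmic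
derivative `g = u₀' / u₀` reads
`(g sin² ‖v‖²)' = ‖v'‖² sin² - (β² - 1) ‖v‖² sin² - ‖v' - g v‖² sin²`,
and `g sin² ‖v‖²` extends continuously by `0` to `a` and `b` as soon as `sin · v` vanishes there.
Integrating over `(a, b)` gives the inequality with constant `β² - 1`; apply it on `(0, y₀)` and
`(y₀, π)` and add.
-/

open Set Filter Topology

theorem Real.hasDerivAt_cot {x : ℝ} (hx : sin x ≠ 0) : HasDerivAt cot (-(1 + cot x ^ 2)) x := by
  have h : cot = fun x => cos x / sin x := funext fun _ => cot_eq_cos_div_sin _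
  simp only [h]
  refine ((hasDerivAt_cos x).div (hasDerivAt_sin x) hx).congr_deriv ?_
  field_simp
  ring

variable {E : Type*} [NormedAddCommGroup E] [InnerProductSpace ℝ E]

theorem hasDerivAt_picone {v : ℝ → E} {w g : ℝ → ℝ} {v' : E} {w' g' c y : ℝ}
    (hv : HasDerivAt v v' y) (hw : HasDerivAt w w' y) (hg : HasDerivAt g g' y)
    -- `g = u' / u` for a solution of `-(w u')' = c w u`
    (hriccati : g' * w y + g y * w' + g y ^ 2 * w y + c * w y = 0) :
    HasDerivAt (fun x => g x * w x * ‖v x‖ ^ 2)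
      (‖v'‖ ^ 2 * w y - c * ‖v y‖ ^ 2 * w y - ‖v' - g y • v y‖ ^ 2 * w y) y := by
  refine ((hg.mul hw).mul hv.norm_sq).congr_deriv ?_
  rw [Pi.mul_apply, norm_sub_sq_real, inner_smul_right, norm_smul, mul_pow, norm_eq_abs, sq_abs,
    real_inner_comm]
  linear_combination ‖v y‖ ^ 2 * hriccati

theorem continuousAt_norm_sq_div_of_hasDerivAt {r : ℝ → E} {h : ℝ → ℝ} {r' : E} {h' e : ℝ}
    (hr : HasDerivAt r r' e) (hh : HasDerivAt h h' e) (hre : r e = 0) (hhe : h e = 0)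
    (hh' : h' ≠ 0) : ContinuousAt (fun x => ‖r x‖ ^ 2 / h x) e := by
  rw [← continuousWithinAt_compl_self, ContinuousWithinAt, hre, hhe, norm_zero, div_zero]
  have hslope : Tendsto (fun x => ‖slope r e x‖ ^ 2 * (x - e) / slope h e x) (𝓝[≠] e)
      (𝓝 (‖r'‖ ^ 2 * (e - e) / h')) :=
    (((hasDerivAt_iff_tendsto_slope.1 hr).norm.pow 2).mul
      ((continuous_sub_right e).continuousWithinAt)).div (hasDerivAt_iff_tendsto_slope.1 hh) hh'
  rw [sub_self, mul_zero, zero_div] at hslope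
  refine hslope.congr' (eventually_nhdsWithin_of_forall fun x (hx : x ≠ e) => ?_)
  rw [slope_def_field]
  simp only [slope_def_module, hre, hhe, sub_zero, norm_smul, mul_pow, norm_inv,
    norm_eq_abs, inv_pow, sq_abs]
  rcases eq_or_ne (h x) 0 with h0 | h0
  · simp [h0]
  · field_simp

theorem setIntegral_Ioo_eq_add {F : Type*} [NormedAddCommGroup F] [NormedSpace ℝ F] {f : ℝ → F}
    {a m b : ℝ} (ham : a ≤ m) (hmb : m ≤ b) (hf : IntegrableOn f (Ioo a b)) :
    ∫ x in Ioo a b, f x = (∫ x in Ioo a m, f x) + ∫ x in Ioo m b, f x := by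
  simp only [← integral_Ioc_eq_integral_Ioo, ← intervalIntegral.integral_of_le ham,
    ← intervalIntegral.integral_of_le hmb, ← intervalIntegral.integral_of_le (ham.trans hmb)]
  refine (intervalIntegral.integral_add_adjacent_intervals ?_ ?_).symm
  · exact (intervalIntegrable_iff_integrableOn_Ioo_of_le ham).2
      (hf.mono_set (Ioo_subset_Ioo_right hmb))
  · exact (intervalIntegrable_iff_integrableOn_Ioo_of_le hmb).2
      (hf.mono_set (Ioo_subset_Ioo_left ham))

theorem integrableOn_norm_sq_mul_sin_sq {F : Type*} [NormedAddCommGroup F] {v : ℝ → F} {a b : ℝ}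
    (hv : ContinuousOn v (Icc a b)) : IntegrableOn (fun y => ‖v y‖ ^ 2 * sin y ^ 2) (Icc a b) :=
  ((hv.norm.pow 2).mul (by fun_prop)).integrableOn_Icc

noncomputable def piconeMultiplier (a β x : ℝ) : ℝ := β * cot (β * (x - a)) - cot x

theorem hasDerivAt_piconeMultiplier {a β y : ℝ} (hy : sin y ≠ 0) (hθ : sin (β * (y - a)) ≠ 0) :
    HasDerivAt (piconeMultiplier a β)
      (-β ^ 2 * (1 + cot (β * (y - a)) ^ 2) + (1 + cot y ^ 2)) y := by
  have hθ' : HasDerivAt (fun x => β * (x - a)) β y := by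
    simpa using ((hasDerivAt_id y).sub_const a).const_mul β
  refine ((((hasDerivAt_cot hθ).comp y hθ').const_mul β).sub (hasDerivAt_cot hy)).congr_deriv ?_
  ring

theorem piconeMultiplier_riccati {a β y : ℝ} (hy : sin y ≠ 0) :
    (-β ^ 2 * (1 + cot (β * (y - a)) ^ 2) + (1 + cot y ^ 2)) * sin y ^ 2
      + piconeMultiplier a β y * (2 * sin y * cos y) + piconeMultiplier a β y ^ 2 * sin y ^ 2
      + (β ^ 2 - 1) * sin y ^ 2 = 0 := by
  have hcos : cos y = cot y * sin y := by rw [cot_eq_cos_div_sin]; field_simp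
  rw [piconeMultiplier, hcos]
  ring

theorem piconeMultiplier_mul_sin_sq (a β x : ℝ) :
    piconeMultiplier a β x * sin x ^ 2
      = β * cos (β * (x - a)) * (sin x ^ 2 / sin (β * (x - a))) - cos x * sin x := by
  rcases eq_or_ne (sin x) 0 with hx | hx
  · simp [hx]
  · rw [piconeMultiplier, cot_eq_cos_div_sin, cot_eq_cos_div_sin]
    field_simp

theorem sin_pi_div_mul_sub_pos {a b x : ℝ} (hx : x ∈ Ioo a b) :
    0 < sin (π / (b - a) * (x - a)) := by
  have hba : 0 < b - a := sub_pos.2 (hx.1.trans hx.2)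
  apply sin_pos_of_pos_of_lt_pi (mul_pos (div_pos pi_pos hba) (sub_pos.2 hx.1))
  rw [div_mul_eq_mul_div, div_lt_iff₀ hba]
  exact mul_lt_mul_of_pos_left (by linarith [hx.2]) pi_pos

theorem continuousOn_piconeMultiplier_mul_sin_sq_mul_norm_sq {v : ℝ → E} {a b : ℝ} (hab : a < b)
    (hv : ∀ y ∈ Icc a b, DifferentiableAt ℝ v y)
    (hva : sin a = 0 ∨ v a = 0) (hvb : sin b = 0 ∨ v b = 0) :
    ContinuousOn (fun x => piconeMultiplier a (π / (b - a)) x * sin x ^ 2 * ‖v x‖ ^ 2)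
      (Icc a b) := by
  set β := π / (b - a)
  have hβ : β ≠ 0 := (div_pos pi_pos (sub_pos.2 hab)).ne'
  have hF : (fun x => piconeMultiplier a β x * sin x ^ 2 * ‖v x‖ ^ 2) = fun x =>
      β * cos (β * (x - a)) * (‖sin x • v x‖ ^ 2 / sin (β * (x - a)))
        - cos x * sin x * ‖v x‖ ^ 2 := by
    ext x
    rw [piconeMultiplier_mul_sin_sq, norm_smul, mul_pow, norm_eq_abs, sq_abs]
    ring
  have hθ (y : ℝ) : HasDerivAt (fun x => β * (x - a)) β y := by
    simpa using ((hasDerivAt_id y).sub_const a).const_mul β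
  -- at the endpoints the numerator vanishes to second order, the denominator only to first order
  have hend (e : ℝ) (he : e ∈ Icc a b) (hve : sin e = 0 ∨ v e = 0)
      (hθe : sin (β * (e - a)) = 0) :
      ContinuousAt (fun x => ‖sin x • v x‖ ^ 2 / sin (β * (x - a))) e := by
    refine continuousAt_norm_sq_div_of_hasDerivAt ((hasDerivAt_sin e).smul (hv e he).hasDerivAt)
      ((hasDerivAt_sin _).comp e (hθ e)) (smul_eq_zero.2 hve) hθe
      (mul_ne_zero ?_ hβ)
    rcases sin_eq_zero_iff_cos_eq.1 hθe with h | h <;> rw [h] <;> norm_num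
  have hquot (x : ℝ) (hx : x ∈ Icc a b) :
      ContinuousAt (fun x => ‖sin x • v x‖ ^ 2 / sin (β * (x - a))) x := by
    rcases eq_endpoints_or_mem_Ioo_of_mem_Icc hx with rfl | rfl | hx'
    · exact hend x hx hva (by simp)
    · exact hend x hx hvb (by rw [div_mul_cancel₀ _ (sub_pos.2 hab).ne', sin_pi])
    · exact ((continuous_sin.continuousAt.smul (hv x hx).continuousAt).norm.pow 2).div
        (continuous_sin.continuousAt.comp (hθ x).continuousAt)
        (sin_pi_div_mul_sub_pos hx').ne'
  intro x hx
  rw [hF]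
  refine (ContinuousAt.sub ?_ ?_).continuousWithinAt
  · exact (continuousAt_const.mul (continuous_cos.continuousAt.comp (hθ x).continuousAt)).mul
      (hquot x hx)
  · exact (continuous_cos.continuousAt.mul continuous_sin.continuousAt).mul
      ((hv x hx).continuousAt.norm.pow 2)

theorem weighted_poincare_sin_sq_Ioo {v : ℝ → E} {a b : ℝ} (ha : 0 ≤ a) (hab : a < b)
    (hb : b ≤ π) (hv : ∀ y ∈ Icc a b, DifferentiableAt ℝ v y)
    (hv' : IntegrableOn (fun y => ‖deriv v y‖ ^ 2 * sin y ^ 2) (Ioo a b))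
    (hva : sin a = 0 ∨ v a = 0) (hvb : sin b = 0 ∨ v b = 0) :
    ((π / (b - a)) ^ 2 - 1) * ∫ y in Ioo a b, ‖v y‖ ^ 2 * sin y ^ 2
      ≤ ∫ y in Ioo a b, ‖deriv v y‖ ^ 2 * sin y ^ 2 := by
  set β := π / (b - a)
  set g := piconeMultiplier a β
  have hderiv (x : ℝ) (hx : x ∈ Ioo a b) :
      HasDerivAt (fun x => g x * sin x ^ 2 * ‖v x‖ ^ 2)
        (‖deriv v x‖ ^ 2 * sin x ^ 2 - (β ^ 2 - 1) * ‖v x‖ ^ 2 * sin x ^ 2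
          - ‖deriv v x - g x • v x‖ ^ 2 * sin x ^ 2) x := by
    have hsin : sin x ≠ 0 :=
      (sin_pos_of_pos_of_lt_pi (ha.trans_lt hx.1) (hx.2.trans_le hb)).ne'
    exact hasDerivAt_picone (hv x (Ioo_subset_Icc_self hx)).hasDerivAt
      (((hasDerivAt_sin x).pow 2).congr_deriv (by ring))
      (hasDerivAt_piconeMultiplier hsin (sin_pi_div_mul_sub_pos hx).ne')
      (piconeMultiplier_riccati hsin)
  have hB := integrableOn_norm_sq_mul_sin_sq fun y hy => (hv y hy).continuousAt.continuousWithinAt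
  have hFTC := intervalIntegral.sub_le_integral_of_hasDeriv_right_of_le
    (φ := fun x => ‖deriv v x‖ ^ 2 * sin x ^ 2 - (β ^ 2 - 1) * (‖v x‖ ^ 2 * sin x ^ 2)) hab.le
    (continuousOn_piconeMultiplier_mul_sin_sq_mul_norm_sq hab hv hva hvb)
    (fun x hx => (hderiv x hx).hasDerivWithinAt)
    ((hv'.congr_set_ae Ioo_ae_eq_Icc.symm).sub (hB.const_mul (β ^ 2 - 1)))
    (fun x _ => by rw [mul_assoc]; exact sub_le_self _ (by positivity))
  have hboundary (e : ℝ) (he : sin e = 0 ∨ v e = 0) (c : ℝ) : c * sin e ^ 2 * ‖v e‖ ^ 2 = 0 := by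
    rcases he with he | he <;> simp [he]
  rwa [hboundary a hva, hboundary b hvb, sub_zero, intervalIntegral.integral_of_le hab.le,
    integral_Ioc_eq_integral_Ioo, integral_sub hv' ((hB.mono_set Ioo_subset_Icc_self).const_mul _),
    integral_const_mul, sub_nonneg] at hFTC

/-- Weighted Poincaré inequality with weight `sin² y` on `(0, π)` for `H¹` functions
vanishing at an interior point `y₀`. -/
theorem weighted_poincare_sin_sq (y₀ : ℝ) (hy₀ : y₀ ∈ Set.Ioo 0 π) (v : ℝ → ℂ)
    (hv_diff : ∀ y ∈ Set.Icc 0 π, DifferentiableAt ℝ v y)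
    (hv_deriv_L2 : IntegrableOn (fun y => ‖deriv v y‖ ^ 2 * (sin y) ^ 2) (Set.Ioo 0 π))
    (hv0 : v y₀ = 0) :
    ∫ y in Set.Ioo 0 π, ‖v y‖ ^ 2 * (sin y) ^ 2
      ≤ (π ^ 2 * min (y₀ ^ (-2 : ℤ)) ((π - y₀) ^ (-2 : ℤ)) - 1)⁻¹ *
        ∫ y in Set.Ioo 0 π, ‖deriv v y‖ ^ 2 * (sin y) ^ 2 := by
  obtain ⟨hy₀_pos, hy₀_lt⟩ := hy₀
  have hleft := weighted_poincare_sin_sq_Ioo le_rfl hy₀_pos hy₀_lt.le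
    (fun y hy => hv_diff y (Icc_subset_Icc_right hy₀_lt.le hy))
    (hv_deriv_L2.mono_set (Ioo_subset_Ioo_right hy₀_lt.le)) (Or.inl sin_zero) (Or.inr hv0)
  have hright := weighted_poincare_sin_sq_Ioo hy₀_pos.le hy₀_lt le_rfl
    (fun y hy => hv_diff y (Icc_subset_Icc_left hy₀_pos.le hy))
    (hv_deriv_L2.mono_set (Ioo_subset_Ioo_left hy₀_pos.le)) (Or.inr hv0) (Or.inl sin_pi)
  have hc : π ^ 2 * min (y₀ ^ (-2 : ℤ)) ((π - y₀) ^ (-2 : ℤ)) - 1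
      = min ((π / (y₀ - 0)) ^ 2 - 1) ((π / (π - y₀)) ^ 2 - 1) := by
    rw [mul_min_of_nonneg _ _ (sq_nonneg π), min_sub_sub_right, sub_zero, div_pow, div_pow,
      zpow_neg, zpow_neg, zpow_ofNat, zpow_ofNat, div_eq_mul_inv, div_eq_mul_inv]
  have hc_pos : 0 < min ((π / (y₀ - 0)) ^ 2 - 1) ((π / (π - y₀)) ^ 2 - 1) := by
    refine lt_min ?_ ?_ <;>
      exact sub_pos.2 (one_lt_pow₀ ((one_lt_div (by linarith)).2 (by linarith)) two_ne_zero)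
  have hv_sq := (integrableOn_norm_sq_mul_sin_sq fun y hy =>
    (hv_diff y hy).continuousAt.continuousWithinAt).mono_set Ioo_subset_Icc_self
  have hv_sq_nonneg (s : Set ℝ) : 0 ≤ ∫ y in s, ‖v y‖ ^ 2 * sin y ^ 2 :=
    setIntegral_nonneg_of_ae (ae_of_all _ fun _ => by positivity)
  rw [hc, inv_mul_eq_div, le_div_iff₀' hc_pos, setIntegral_Ioo_eq_add hy₀_pos.le hy₀_lt.le hv_sq,
    setIntegral_Ioo_eq_add hy₀_pos.le hy₀_lt.le hv_deriv_L2, mul_add]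
  exact add_le_add
    ((mul_le_mul_of_nonneg_right (min_le_left _ _) (hv_sq_nonneg _)).trans hleft)
    ((mul_le_mul_of_nonneg_right (min_le_right _ _) (hv_sq_nonneg _)).trans hright)
end

section
/- Let y₀ ∈ (0, π). For every v ∈ H₀^1(0, π) with v(y₀) = 0, the inequality ∫₀^π |v(y)|²/(y − y₀)² dy ≤ c₁₃ (∫₀^π |v'(y)|² dy − ∫₀^π |v(y)|² dy) holds, where c₁₃ = 4π²/(π² − max{y₀², (π − y₀)²}). -/
/-!
Both inequalities behind the theorem come from one ground-state (Riccati) argument: if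
`q ≤ -g' - g²` on `(a, b)`, then `(g ‖v‖²)' ≤ ‖v'‖² - q ‖v‖²` since `‖v' - g v‖² ≥ 0`, so
`∫ q ‖v‖² ≤ ∫ ‖v'‖²` as soon as `g ‖v‖²` tends to `0` at both ends, which holds when `v` vanishes
there and `g = O(1 / (y - a))`, `g = O(1 / (y - b))`.
With `g = 1 / (2 (y - y₀))` this is Hardy's inequality `∫ ‖v‖² / (y - y₀)² ≤ 4 ∫ ‖v'‖²` on each
side of `y₀`; with `g = l cot (l (y - a))`, `l = π / (b - a)`, it is Wirtinger's inequality
`π² ∫ ‖v‖² ≤ (b - a)² ∫ ‖v'‖²`. On a piece of length at most `L < π` the latter turns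
`4 ∫ ‖v'‖²` into `4π² / (π² - L²) (∫ ‖v'‖² - ∫ ‖v‖²)`, and the two pieces add up.
-/

open MeasureTheory Real

open Set Filter Topology Asymptotics

theorem setIntegral_Ioo_add_Ioo {F : Type*} [NormedAddCommGroup F] [NormedSpace ℝ F]
    {f : ℝ → F} {a m b : ℝ} (ham : a ≤ m) (hmb : m ≤ b) (h₁ : IntegrableOn f (Ioo a m))
    (h₂ : IntegrableOn f (Ioo m b)) :
    (∫ x in Ioo a m, f x) + ∫ x in Ioo m b, f x = ∫ x in Ioo a b, f x := by
  simp only [← integral_Ioc_eq_integral_Ioo, ← intervalIntegral.integral_of_le, ham, hmb,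
    ham.trans hmb]
  exact intervalIntegral.integral_add_adjacent_intervals
    ((intervalIntegrable_iff_integrableOn_Ioo_of_le ham).2 h₁)
    ((intervalIntegrable_iff_integrableOn_Ioo_of_le hmb).2 h₂)

theorem integrableOn_Ioo_and_setIntegral_le_of_Icc {F : ℝ → ℝ} {u : ℝ × ℝ → ℝ} {a b M : ℝ}
    (hab : a < b) (hF : ContinuousOn F (Ioo a b)) (hF0 : ∀ y ∈ Ioo a b, 0 ≤ F y)
    (hu : Tendsto u (𝓝[>] a ×ˢ 𝓝[<] b) (𝓝 M))
    (hbound : ∀ c d, a < c → c ≤ d → d < b → ∫ y in Icc c d, F y ≤ u (c, d)) :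
    IntegrableOn F (Ioo a b) ∧ ∫ y in Ioo a b, F y ≤ M := by
  set μ := volume.restrict (Ioo a b)
  have hφ : AECover μ (𝓝[>] a ×ˢ 𝓝[<] b) fun p => Icc p.1 p.2 :=
    aecover_Ioo_of_Icc (tendsto_fst.mono_right nhdsWithin_le_nhds)
      (tendsto_snd.mono_right nhdsWithin_le_nhds)
  have hinside : ∀ᶠ p in 𝓝[>] a ×ˢ 𝓝[<] b, a < p.1 ∧ p.1 ≤ p.2 ∧ p.2 < b := by
    filter_upwards [prod_mem_prod (Ioo_mem_nhdsGT (left_lt_add_div_two.2 hab))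
      (Ioo_mem_nhdsLT (add_div_two_lt_right.2 hab))] with p ⟨⟨ha, hm⟩, ⟨hm', hb⟩⟩
    exact ⟨ha, hm.le.trans hm'.le, hb⟩
  have hF0' : 0 ≤ᵐ[μ] F := (ae_restrict_iff' measurableSet_Ioo).2 (.of_forall hF0)
  have hlin : ∀ᶠ p in 𝓝[>] a ×ˢ 𝓝[<] b,
      ∫⁻ y in Icc p.1 p.2, ENNReal.ofReal (F y) ∂μ ≤ ENNReal.ofReal (u p) := by
    filter_upwards [hinside] with p ⟨hac, hcd, hdb⟩
    have hsub : Icc p.1 p.2 ⊆ Ioo a b := Icc_subset_Ioo hac hdb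
    rw [Measure.restrict_restrict measurableSet_Icc, inter_eq_left.2 hsub,
      ← ofReal_integral_eq_lintegral_ofReal ((hF.mono hsub).integrableOn_Icc)
        ((ae_restrict_iff' measurableSet_Icc).2 (.of_forall fun y hy => hF0 y (hsub hy)))]
    exact ENNReal.ofReal_le_ofReal (hbound p.1 p.2 hac hcd hdb)
  have hFm : AEStronglyMeasurable F μ := hF.aestronglyMeasurable measurableSet_Ioo
  have hlim : ∫⁻ y, ENNReal.ofReal (F y) ∂μ ≤ ENNReal.ofReal M :=
    le_of_tendsto_of_tendsto (hφ.lintegral_tendsto_of_countably_generated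
      hFm.aemeasurable.ennreal_ofReal) (ENNReal.tendsto_ofReal hu) hlin
  have hM : 0 ≤ M := ge_of_tendsto hu <| hinside.mono fun p ⟨hac, hcd, hdb⟩ =>
    (setIntegral_nonneg measurableSet_Icc fun y hy =>
      hF0 y (Icc_subset_Ioo hac hdb hy)).trans (hbound p.1 p.2 hac hcd hdb)
  refine ⟨⟨hFm, (hasFiniteIntegral_iff_ofReal hF0').2 (hlim.trans_lt ENNReal.ofReal_lt_top)⟩, ?_⟩
  rw [integral_eq_lintegral_of_nonneg_ae hF0' hFm]
  exact ENNReal.toReal_le_of_le_ofReal hM hlim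

theorem isBigO_mul_cos_div_sin {l x : ℝ} :
    (fun y => l * cos (l * (y - x)) / sin (l * (y - x))) =O[𝓝 x] fun y => (y - x)⁻¹ := by
  have hcos : cos =O[𝓝 0] fun _ => (1 : ℝ) :=
    .of_bound 1 (.of_forall fun t => by simpa using abs_cos_le_one t)
  have hcot : (fun t => cos t / sin t) =O[𝓝 0] fun t => t⁻¹ := by
    simpa only [div_eq_mul_inv, one_mul, Pi.inv_apply, id] using
      hcos.mul isEquivalent_sin.inv.isBigO
  have ht : Tendsto (fun y => l * (y - x)) (𝓝 x) (𝓝 0) := by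
    simpa using (show Continuous fun y => l * (y - x) by fun_prop).tendsto x
  have hinv : (fun y => (l * (y - x))⁻¹) =O[𝓝 x] fun y => (y - x)⁻¹ := by
    simpa only [mul_inv] using (isBigO_refl (fun y => (y - x)⁻¹) (𝓝 x)).const_mul_left l⁻¹
  simpa only [mul_div_assoc, Function.comp_def] using
    ((hcot.comp_tendsto ht).trans hinv).const_mul_left l

section

variable {E : Type*} [NormedAddCommGroup E] [InnerProductSpace ℝ E]

theorem two_mul_mul_inner_le (t : ℝ) (x y : E) :
    2 * t * inner ℝ x y ≤ ‖y‖ ^ 2 + t ^ 2 * ‖x‖ ^ 2 := by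
  have h := norm_sub_sq_real y (t • x)
  rw [inner_smul_right, norm_smul, real_inner_comm, Real.norm_eq_abs, mul_pow, sq_abs] at h
  linarith [sq_nonneg ‖y - t • x‖]

theorem intervalIntegral_mul_norm_sq_le_of_riccati {v : ℝ → E} {g g' q : ℝ → ℝ} {c d : ℝ}
    (hcd : c ≤ d) (hv : ∀ y ∈ Icc c d, DifferentiableAt ℝ v y)
    (hg : ∀ y ∈ Icc c d, HasDerivAt g (g' y) y) (hq : ContinuousOn q (Icc c d))
    (hric : ∀ y ∈ Ioo c d, q y ≤ -g' y - g y ^ 2)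
    (hv' : IntegrableOn (fun y => ‖deriv v y‖ ^ 2) (Icc c d)) :
    ∫ y in c..d, q y * ‖v y‖ ^ 2
      ≤ (∫ y in c..d, ‖deriv v y‖ ^ 2) + g c * ‖v c‖ ^ 2 - g d * ‖v d‖ ^ 2 := by
  have hvc : ContinuousOn v (Icc c d) := fun y hy => (hv y hy).continuousAt.continuousWithinAt
  have hgc : ContinuousOn g (Icc c d) := fun y hy => (hg y hy).continuousAt.continuousWithinAt
  have hqv : IntegrableOn (fun y => q y * ‖v y‖ ^ 2) (Icc c d) :=
    (hq.mul (hvc.norm.pow 2)).integrableOn_Icc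
  have hderiv : ∀ y ∈ Ioo c d, HasDerivAt (fun y => g y * ‖v y‖ ^ 2)
      (g' y * ‖v y‖ ^ 2 + g y * (2 * inner ℝ (v y) (deriv v y))) y := fun y hy =>
    (hg y (Ioo_subset_Icc_self hy)).mul (hv y (Ioo_subset_Icc_self hy)).hasDerivAt.norm_sq
  have hle : ∀ y ∈ Ioo c d, g' y * ‖v y‖ ^ 2 + g y * (2 * inner ℝ (v y) (deriv v y))
      ≤ ‖deriv v y‖ ^ 2 - q y * ‖v y‖ ^ 2 := fun y hy => by
    linarith [two_mul_mul_inner_le (g y) (v y) (deriv v y),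
      mul_le_mul_of_nonneg_right (hric y hy) (sq_nonneg ‖v y‖)]
  have hftc := intervalIntegral.sub_le_integral_of_hasDeriv_right_of_le
    (g := fun y => g y * ‖v y‖ ^ 2) (φ := fun y => ‖deriv v y‖ ^ 2 - q y * ‖v y‖ ^ 2) hcd
    (hgc.mul (hvc.norm.pow 2)) (fun y hy => (hderiv y hy).hasDerivWithinAt) (hv'.sub hqv) hle
  rw [intervalIntegral.integral_sub ((intervalIntegrable_iff_integrableOn_Icc_of_le hcd).2 hv')
    ((intervalIntegrable_iff_integrableOn_Icc_of_le hcd).2 hqv)] at hftc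
  linarith

theorem integral_Ioo_mul_norm_sq_le_of_riccati {v : ℝ → E} {g g' q : ℝ → ℝ} {a b : ℝ}
    (hab : a < b) (hv : ∀ y ∈ Ioo a b, DifferentiableAt ℝ v y)
    (hg : ∀ y ∈ Ioo a b, HasDerivAt g (g' y) y) (hq : ContinuousOn q (Ioo a b))
    (hq0 : ∀ y ∈ Ioo a b, 0 ≤ q y) (hric : ∀ y ∈ Ioo a b, q y ≤ -g' y - g y ^ 2)
    (hv' : IntegrableOn (fun y => ‖deriv v y‖ ^ 2) (Ioo a b))
    (ha : Tendsto (fun y => g y * ‖v y‖ ^ 2) (𝓝[>] a) (𝓝 0))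
    (hb : Tendsto (fun y => g y * ‖v y‖ ^ 2) (𝓝[<] b) (𝓝 0)) :
    IntegrableOn (fun y => q y * ‖v y‖ ^ 2) (Ioo a b) ∧
      ∫ y in Ioo a b, q y * ‖v y‖ ^ 2 ≤ ∫ y in Ioo a b, ‖deriv v y‖ ^ 2 := by
  have hvc : ContinuousOn v (Ioo a b) := fun y hy => (hv y hy).continuousAt.continuousWithinAt
  have hu : Tendsto (fun p : ℝ × ℝ => (∫ y in Ioo a b, ‖deriv v y‖ ^ 2) +
      g p.1 * ‖v p.1‖ ^ 2 - g p.2 * ‖v p.2‖ ^ 2) (𝓝[>] a ×ˢ 𝓝[<] b)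
      (𝓝 (∫ y in Ioo a b, ‖deriv v y‖ ^ 2)) := by
    simpa using (tendsto_const_nhds.add (ha.comp tendsto_fst)).sub (hb.comp tendsto_snd)
  refine integrableOn_Ioo_and_setIntegral_le_of_Icc hab (hq.mul (hvc.norm.pow 2))
    (fun y hy => mul_nonneg (hq0 y hy) (sq_nonneg _)) hu fun c d hac hcd hdb => ?_
  have hsub : Icc c d ⊆ Ioo a b := Icc_subset_Ioo hac hdb
  have hric_cd := intervalIntegral_mul_norm_sq_le_of_riccati hcd (fun y hy => hv y (hsub hy))
    (fun y hy => hg y (hsub hy)) (hq.mono hsub)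
    (fun y hy => hric y (hsub (Ioo_subset_Icc_self hy))) (hv'.mono_set hsub)
  have hmono : ∫ y in c..d, ‖deriv v y‖ ^ 2 ≤ ∫ y in Ioo a b, ‖deriv v y‖ ^ 2 := by
    rw [intervalIntegral.integral_of_le hcd]
    exact setIntegral_mono_set hv' ((ae_restrict_iff' measurableSet_Ioo).2 (.of_forall
      fun y _ => sq_nonneg _)) (Ioc_subset_Icc_self.trans hsub).eventuallyLE
  rw [integral_Icc_eq_integral_Ioc, ← intervalIntegral.integral_of_le hcd]
  linarith

theorem tendsto_mul_norm_sq_of_isBigO_inv {v : ℝ → E} {g : ℝ → ℝ} {x : ℝ}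
    (hv : DifferentiableAt ℝ v x) (hvx : v x = 0) (hg : g =O[𝓝 x] fun y => (y - x)⁻¹) :
    Tendsto (fun y => g y * ‖v y‖ ^ 2) (𝓝 x) (𝓝 0) := by
  have hv_lin : v =O[𝓝 x] fun y => y - x := by simpa [hvx] using hv.isBigO_sub
  have hprod := hg.mul (hv_lin.norm_left.pow 2)
  have hcancel : (fun y => (y - x)⁻¹ * (y - x) ^ 2) = fun y => y - x := by
    funext y
    rw [sq, ← mul_assoc, inv_mul_mul_self]
  rw [hcancel] at hprod
  simpa using hprod.trans_tendsto (tendsto_sub_nhds_zero_iff.2 tendsto_id)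

theorem tendsto_inv_two_mul_sub_mul_norm_sq {v : ℝ → E} {x : ℝ} (p : ℝ)
    (hv : DifferentiableAt ℝ v x) (hvx : v x = 0) :
    Tendsto (fun y => (2 * (y - p))⁻¹ * ‖v y‖ ^ 2) (𝓝 x) (𝓝 0) := by
  rcases eq_or_ne x p with rfl | hxp
  · refine tendsto_mul_norm_sq_of_isBigO_inv hv hvx ?_
    simpa only [mul_inv] using (isBigO_refl (fun y => (y - x)⁻¹) (𝓝 x)).const_mul_left 2⁻¹
  · have hcont : ContinuousAt (fun y => (2 * (y - p))⁻¹ * ‖v y‖ ^ 2) x :=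
      ((continuousAt_const.mul (continuousAt_id.sub continuousAt_const)).inv₀
        (mul_ne_zero two_ne_zero (sub_ne_zero.2 hxp))).mul (hv.continuousAt.norm.pow 2)
    simpa [hvx] using hcont.tendsto

theorem hardy_inequality_Ioo {v : ℝ → E} {a b p : ℝ} (hab : a < b) (hp : p ∉ Ioo a b)
    (hv : ∀ y ∈ Icc a b, DifferentiableAt ℝ v y) (hva : v a = 0) (hvb : v b = 0)
    (hv' : IntegrableOn (fun y => ‖deriv v y‖ ^ 2) (Ioo a b)) :
    IntegrableOn (fun y => ‖v y‖ ^ 2 / (y - p) ^ 2) (Ioo a b) ∧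
      ∫ y in Ioo a b, ‖v y‖ ^ 2 / (y - p) ^ 2 ≤ 4 * ∫ y in Ioo a b, ‖deriv v y‖ ^ 2 := by
  have hne : ∀ y ∈ Ioo a b, y - p ≠ 0 := fun y hy h => hp (sub_eq_zero.1 h ▸ hy)
  have hg : ∀ y ∈ Ioo a b,
      HasDerivAt (fun y => (2 * (y - p))⁻¹) (-(2 * (y - p) ^ 2)⁻¹) y := fun y hy => by
    refine ((((hasDerivAt_id' y).sub_const p).const_mul 2).inv
      (mul_ne_zero two_ne_zero (hne y hy))).congr_deriv ?_
    have := hne y hy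
    field_simp
  have hq : ContinuousOn (fun y => (4 * (y - p) ^ 2)⁻¹) (Ioo a b) :=
    (continuousOn_const.mul ((continuousOn_id.sub continuousOn_const).pow 2)).inv₀
      fun y hy => by simp [hne y hy]
  obtain ⟨hint, hle⟩ := integral_Ioo_mul_norm_sq_le_of_riccati hab
    (fun y hy => hv y (Ioo_subset_Icc_self hy)) hg hq (fun y _ => by positivity)
    (fun y _ => le_of_eq (by generalize y - p = x; ring)) hv'
    ((tendsto_inv_two_mul_sub_mul_norm_sq p (hv a (left_mem_Icc.2 hab.le)) hva).mono_left
      nhdsWithin_le_nhds)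
    ((tendsto_inv_two_mul_sub_mul_norm_sq p (hv b (right_mem_Icc.2 hab.le)) hvb).mono_left
      nhdsWithin_le_nhds)
  have hfour : (fun y => ‖v y‖ ^ 2 / (y - p) ^ 2)
      = fun y => 4 * ((4 * (y - p) ^ 2)⁻¹ * ‖v y‖ ^ 2) := by
    funext y
    generalize y - p = x
    ring
  rw [hfour, integral_const_mul]
  exact ⟨hint.const_mul 4, by linarith⟩

theorem wirtinger_inequality_Ioo {v : ℝ → E} {a b : ℝ} (hab : a < b)
    (hv : ∀ y ∈ Icc a b, DifferentiableAt ℝ v y) (hva : v a = 0) (hvb : v b = 0)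
    (hv' : IntegrableOn (fun y => ‖deriv v y‖ ^ 2) (Ioo a b)) :
    π ^ 2 * ∫ y in Ioo a b, ‖v y‖ ^ 2 ≤ (b - a) ^ 2 * ∫ y in Ioo a b, ‖deriv v y‖ ^ 2 := by
  obtain ⟨l, hl0, hl⟩ : ∃ l, 0 < l ∧ l * (b - a) = π :=
    ⟨π / (b - a), by have := sub_pos.2 hab; positivity, div_mul_cancel₀ π (sub_pos.2 hab).ne'⟩
  have hsin : ∀ y ∈ Ioo a b, sin (l * (y - a)) ≠ 0 := fun y hy => by
    refine (sin_pos_of_pos_of_lt_pi (mul_pos hl0 (sub_pos.2 hy.1)) ?_).ne'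
    nlinarith [hy.2, pi_pos]
  have hg : ∀ y ∈ Ioo a b, HasDerivAt (fun y => l * cos (l * (y - a)) / sin (l * (y - a)))
      (-l ^ 2 / sin (l * (y - a)) ^ 2) y := fun y hy => by
    have hu := ((hasDerivAt_id' y).sub_const a).const_mul l
    refine ((hu.cos.const_mul l).div hu.sin (hsin y hy)).congr_deriv ?_
    have := hsin y hy
    field_simp
    linear_combination -sin_sq_add_cos_sq (l * (y - a))
  have hric : ∀ y ∈ Ioo a b, l ^ 2 ≤ -(-l ^ 2 / sin (l * (y - a)) ^ 2)
      - (l * cos (l * (y - a)) / sin (l * (y - a))) ^ 2 := fun y hy => by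
    have := hsin y hy
    refine le_of_eq ?_
    field_simp
    linear_combination sin_sq_add_cos_sq (l * (y - a))
  have ha := tendsto_mul_norm_sq_of_isBigO_inv (hv a (left_mem_Icc.2 hab.le)) hva
    (isBigO_mul_cos_div_sin (l := l))
  have hb := tendsto_mul_norm_sq_of_isBigO_inv (hv b (right_mem_Icc.2 hab.le)) hvb
    (isBigO_mul_cos_div_sin (l := l))
  have hperiod : ∀ y, l * cos (l * (y - b)) / sin (l * (y - b))
      = l * cos (l * (y - a)) / sin (l * (y - a)) := fun y => by
    rw [show l * (y - a) = l * (y - b) + π by linear_combination hl, cos_add_pi, sin_add_pi,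
      mul_neg, neg_div_neg_eq]
  simp only [hperiod] at hb
  obtain ⟨-, hle⟩ := integral_Ioo_mul_norm_sq_le_of_riccati (q := fun _ => l ^ 2) hab
    (fun y hy => hv y (Ioo_subset_Icc_self hy)) hg continuousOn_const (fun _ _ => sq_nonneg l)
    hric hv' (ha.mono_left nhdsWithin_le_nhds) (hb.mono_left nhdsWithin_le_nhds)
  rw [integral_const_mul] at hle
  calc π ^ 2 * ∫ y in Ioo a b, ‖v y‖ ^ 2
      = (b - a) ^ 2 * (l ^ 2 * ∫ y in Ioo a b, ‖v y‖ ^ 2) := by rw [← hl]; ring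
    _ ≤ (b - a) ^ 2 * ∫ y in Ioo a b, ‖deriv v y‖ ^ 2 := by gcongr

theorem hardy_dirichlet_Ioo {v : ℝ → E} {a b p M : ℝ} (hab : a < b) (hp : p ∉ Ioo a b)
    (hba : (b - a) ^ 2 ≤ M) (hM : M < π ^ 2) (hv : ∀ y ∈ Icc a b, DifferentiableAt ℝ v y)
    (hva : v a = 0) (hvb : v b = 0) (hv' : IntegrableOn (fun y => ‖deriv v y‖ ^ 2) (Ioo a b)) :
    IntegrableOn (fun y => ‖v y‖ ^ 2 / (y - p) ^ 2) (Ioo a b) ∧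
      ∫ y in Ioo a b, ‖v y‖ ^ 2 / (y - p) ^ 2 ≤ 4 * π ^ 2 / (π ^ 2 - M) *
        ((∫ y in Ioo a b, ‖deriv v y‖ ^ 2) - ∫ y in Ioo a b, ‖v y‖ ^ 2) := by
  obtain ⟨hint, hardy⟩ := hardy_inequality_Ioo hab hp hv hva hvb hv'
  have wirtinger := wirtinger_inequality_Ioo hab hv hva hvb hv'
  have hD : 0 ≤ ∫ y in Ioo a b, ‖deriv v y‖ ^ 2 :=
    setIntegral_nonneg measurableSet_Ioo fun _ _ => sq_nonneg _
  refine ⟨hint, hardy.trans ?_⟩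
  rw [div_mul_eq_mul_div, le_div_iff₀ (sub_pos.2 hM)]
  linarith [mul_le_mul_of_nonneg_right hba hD]

end

/-- Hardy-type inequality on `(0, π)` for functions in `H₀¹(0, π)` vanishing at an
interior point `y₀`. -/
theorem hardy_dirichlet_interval (y₀ : ℝ) (hy₀ : y₀ ∈ Set.Ioo 0 π) (v : ℝ → ℂ)
    (hv_diff : ∀ y ∈ Set.Icc 0 π, DifferentiableAt ℝ v y)
    (hv_deriv_L2 : IntegrableOn (fun y => ‖deriv v y‖ ^ 2) (Set.Ioo 0 π))
    (hv_bd0 : v 0 = 0) (hv_bdπ : v π = 0)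
    (hv0 : v y₀ = 0) :
    ∫ y in Set.Ioo 0 π, ‖v y‖ ^ 2 / (y - y₀) ^ 2
      ≤ (4 * π ^ 2 / (π ^ 2 - max (y₀ ^ 2) ((π - y₀) ^ 2))) *
        ((∫ y in Set.Ioo 0 π, ‖deriv v y‖ ^ 2) - ∫ y in Set.Ioo 0 π, ‖v y‖ ^ 2) := by
  obtain ⟨h0, hπ⟩ := hy₀
  have hl : Ioo 0 y₀ ⊆ Ioo 0 π := Ioo_subset_Ioo_right hπ.le
  have hr : Ioo y₀ π ⊆ Ioo 0 π := Ioo_subset_Ioo_left h0.le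
  have hM : max (y₀ ^ 2) ((π - y₀) ^ 2) < π ^ 2 := max_lt (by nlinarith) (by nlinarith)
  have hP : IntegrableOn (fun y => ‖v y‖ ^ 2) (Ioo 0 π) :=
    (ContinuousOn.integrableOn_Icc fun y hy =>
      ((hv_diff y hy).continuousAt.norm.pow 2).continuousWithinAt).mono_set Ioo_subset_Icc_self
  obtain ⟨hi₁, h₁⟩ := hardy_dirichlet_Ioo (p := y₀) h0 (by simp)
    (by rw [sub_zero]; exact le_max_left _ _) hM
    (fun y hy => hv_diff y (Icc_subset_Icc_right hπ.le hy)) hv_bd0 hv0 (hv_deriv_L2.mono_set hl)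
  obtain ⟨hi₂, h₂⟩ := hardy_dirichlet_Ioo (p := y₀) hπ (by simp) (le_max_right _ _) hM
    (fun y hy => hv_diff y (Icc_subset_Icc_left h0.le hy)) hv0 hv_bdπ (hv_deriv_L2.mono_set hr)
  rw [← setIntegral_Ioo_add_Ioo h0.le hπ.le hi₁ hi₂,
    ← setIntegral_Ioo_add_Ioo h0.le hπ.le (hv_deriv_L2.mono_set hl) (hv_deriv_L2.mono_set hr),
    ← setIntegral_Ioo_add_Ioo h0.le hπ.le (hP.mono_set hl) (hP.mono_set hr)]
  linarith
end

section
/- Let y₀ ∈ (0, π). For every u ∈ H^1(0, π) with u(y₀) = 0, one has ∫₀^π |u(y)|² sin² y /(y − y₀)² dy ≤ c₁₃ ∫₀^π |u'(y)|² sin² y dy, where c₁₃ = 4π²/(π² − max{y₀², (π − y₀)²}). -/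
/-!
Put `v = sin y • u`. Differentiating `sin y cos y ‖u‖²` and integrating over an interval
`(a, b)` at whose ends `v` vanishes gives `∫ ‖v'‖² = ∫ ‖u'‖² sin² y + ∫ ‖v‖²`. On the pieces
`(0, y₀)` and `(y₀, π)`, Wirtinger's inequality `π² ∫ ‖v‖² ≤ (b - a)² ∫ ‖v'‖²` turns this into
`(π² - M) ∫ ‖v'‖² ≤ π² ∫ ‖u'‖² sin² y` with `M = max (y₀², (π - y₀)²)`, and Hardy's inequality
`∫ ‖v‖² / (y - y₀)² ≤ 4 ∫ ‖v'‖²` at the endpoint `y₀` finishes the proof.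

Hardy and Wirtinger are both instances of Picone's identity
`‖v'‖² - (g ‖v‖²)' = ‖v' - g • v‖² + ρ ‖v‖²` for a solution `g` of the Riccati equation
`g' = -(g² + ρ)`: take `g = 1 / (2 (y - c))`, `ρ = g²`, respectively
`g = k cot (k (y - a))`, `ρ = k²` with `k = π / (b - a)`.
-/

open MeasureTheory Real Set Filter Topology
open scoped RealInnerProductSpace

section

variable {E : Type*} [NormedAddCommGroup E] [InnerProductSpace ℝ E] {a b : ℝ}

theorem exists_bound_of_continuousOn_Ioo {F : Type*} [NormedAddCommGroup F] {f : ℝ → F}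
    {la lb : F} (hf : ContinuousOn f (Ioo a b)) (ha : Tendsto f (𝓝[>] a) (𝓝 la))
    (hb : Tendsto f (𝓝[<] b) (𝓝 lb)) : ∃ C, ∀ y ∈ Ioo a b, ‖f y‖ ≤ C := by
  obtain ⟨C, hC⟩ :=
    isCompact_Icc.exists_bound_of_continuousOn (continuousOn_Icc_extendFrom_Ioo hf ha hb)
  exact ⟨C, fun y hy => extendFrom_extends hf y hy ▸ hC y (Ioo_subset_Icc_self hy)⟩

theorem aestronglyMeasurable_of_hasDerivAt {F : Type*} [NormedAddCommGroup F] [NormedSpace ℝ F]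
    [CompleteSpace F] {s : Set ℝ} {f f' : ℝ → F} (hs : MeasurableSet s)
    (hf : ∀ y ∈ s, HasDerivAt f (f' y) y) : AEStronglyMeasurable f' (volume.restrict s) :=
  (aestronglyMeasurable_deriv f _).congr <|
    (ae_restrict_iff' hs).2 <| ae_of_all _ fun y hy => (hf y hy).deriv

theorem integrable_inner_of_norm_le {α : Type*} [MeasurableSpace α] {μ : Measure α}
    [IsFiniteMeasure μ] {f g : α → E} {C : ℝ} (hf : AEStronglyMeasurable f μ)
    (hfC : ∀ᵐ x ∂μ, ‖f x‖ ≤ C) (hg : AEStronglyMeasurable g μ)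
    (hg2 : Integrable (fun x => ‖g x‖ ^ 2) μ) : Integrable (fun x => ⟪f x, g x⟫) μ := by
  refine ((integrable_const (C ^ 2)).add hg2).mono' (hf.inner hg) (hfC.mono fun x hx => ?_)
  have := abs_real_inner_le_norm (f x) (g x)
  rw [Pi.add_apply, Real.norm_eq_abs]
  nlinarith [sq_nonneg (C - ‖g x‖), mul_le_mul_of_nonneg_right hx (norm_nonneg (g x))]

theorem setIntegral_Ioo_add_setIntegral_Ioo {F : Type*} [NormedAddCommGroup F] [NormedSpace ℝ F]
    {f : ℝ → F} {c : ℝ} (hab : a ≤ b) (hbc : b ≤ c) (h₁ : IntegrableOn f (Ioo a b))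
    (h₂ : IntegrableOn f (Ioo b c)) :
    (∫ y in Ioo a b, f y) + ∫ y in Ioo b c, f y = ∫ y in Ioo a c, f y := by
  simp only [← integral_Ioc_eq_integral_Ioo, ← intervalIntegral.integral_of_le, hab, hbc,
    hab.trans hbc]
  exact intervalIntegral.integral_add_adjacent_intervals
    ((intervalIntegrable_iff_integrableOn_Ioo_of_le hab).2 h₁)
    ((intervalIntegrable_iff_integrableOn_Ioo_of_le hbc).2 h₂)

theorem tendsto_inv_smul_of_hasDerivAt {φ : ℝ → ℝ} {v : ℝ → E} {c φ' : ℝ} {v' : E}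
    (hφ : HasDerivAt φ φ' c) (hv : HasDerivAt v v' c) (hφc : φ c = 0) (hvc : v c = 0)
    (hφ' : φ' ≠ 0) : Tendsto (fun y => (φ y)⁻¹ • v y) (𝓝[≠] c) (𝓝 (φ'⁻¹ • v')) := by
  refine ((hasDerivAt_iff_tendsto_slope.1 hφ).inv₀ hφ').smul
    (hasDerivAt_iff_tendsto_slope.1 hv) |>.congr' ?_
  filter_upwards [self_mem_nhdsWithin] with y hy
  have hyc : y - c ≠ 0 := sub_ne_zero.2 hy
  rw [slope_def_module, slope_def_module, hφc, hvc, sub_zero, sub_zero, smul_smul, smul_eq_mul,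
    mul_inv, inv_inv, mul_assoc, mul_left_comm, mul_inv_cancel₀ hyc, mul_one]

theorem inner_dslope_of_eq_zero {v : ℝ → E} {c : ℝ} (hvc : v c = 0) (y : ℝ) :
    ⟪v y, dslope v c y⟫ = (y - c)⁻¹ * ‖v y‖ ^ 2 := by
  rcases eq_or_ne y c with rfl | hy
  · simp [hvc]
  · rw [dslope_of_ne _ hy, slope_def_module, hvc, sub_zero, real_inner_smul_right,
      real_inner_self_eq_norm_sq]

theorem continuousOn_dslope_Icc {v v' : ℝ → E} {c : ℝ}
    (hv : ∀ y ∈ Icc a b, HasDerivAt v (v' y) y) (hc : c ∈ Icc a b) :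
    ContinuousOn (dslope v c) (Icc a b) := by
  intro y hy
  refine ContinuousAt.continuousWithinAt ?_
  rcases eq_or_ne y c with rfl | hyc
  · exact continuousAt_dslope_same.2 (hv y hy).differentiableAt
  · exact (continuousAt_dslope_of_ne hyc).2 (hv y hy).continuousAt

theorem picone_inequality [CompleteSpace E] (hab : a < b) {v v' : ℝ → E} {g ρ : ℝ → ℝ}
    {ma mb : E} (hv_cont : ContinuousOn v (Icc a b)) (hv : ∀ y ∈ Ioo a b, HasDerivAt v (v' y) y)
    (hg : ∀ y ∈ Ioo a b, HasDerivAt g (-(g y ^ 2 + ρ y)) y)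
    (ha : Tendsto (fun y => g y • v y) (𝓝[>] a) (𝓝 ma))
    (hb : Tendsto (fun y => g y • v y) (𝓝[<] b) (𝓝 mb))
    (hv' : IntegrableOn (fun y => ‖v' y‖ ^ 2) (Ioo a b))
    (hρ : IntegrableOn (fun y => ρ y * ‖v y‖ ^ 2) (Ioo a b)) :
    ⟪v b, mb⟫ - ⟪v a, ma⟫ + ∫ y in Ioo a b, ρ y * ‖v y‖ ^ 2 ≤ ∫ y in Ioo a b, ‖v' y‖ ^ 2 := by
  set h : ℝ → E := fun y => g y • v y
  have hh_cont : ContinuousOn h (Ioo a b) :=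
    (HasDerivAt.continuousOn hg).smul (hv_cont.mono Ioo_subset_Icc_self)
  have hh_meas : AEStronglyMeasurable h (volume.restrict (Ioo a b)) :=
    hh_cont.aestronglyMeasurable measurableSet_Ioo
  obtain ⟨C, hC⟩ := exists_bound_of_continuousOn_Ioo hh_cont ha hb
  have hC_ae : ∀ᵐ y ∂volume.restrict (Ioo a b), ‖h y‖ ≤ C :=
    (ae_restrict_iff' measurableSet_Ioo).2 (ae_of_all _ hC)
  set D : ℝ → ℝ := fun y => 2 * ⟪h y, v' y⟫ - ‖h y‖ ^ 2 - ρ y * ‖v y‖ ^ 2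
  have hD : ∀ y ∈ Ioo a b, HasDerivAt (fun y => g y * ‖v y‖ ^ 2) (D y) y := by
    intro y hy
    refine ((hg y hy).fun_mul (hv y hy).norm_sq).congr_deriv ?_
    simp only [D, h, norm_smul, real_inner_smul_left, mul_pow, Real.norm_eq_abs, sq_abs]
    ring
  have hD_int : IntegrableOn D (Ioo a b) :=
    (((integrable_inner_of_norm_le hh_meas hC_ae
      (aestronglyMeasurable_of_hasDerivAt measurableSet_Ioo hv) hv').const_mul 2).sub
      (Integrable.of_bound (hh_meas.norm.pow 2) (C ^ 2) (hC_ae.mono fun y hy => by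
        rw [Pi.pow_apply, norm_pow, norm_norm]
        exact pow_le_pow_left₀ (norm_nonneg _) hy 2))).sub hρ
  have hlim : ∀ {l : Filter ℝ} {x : ℝ} {m : E}, Tendsto v l (𝓝 (v x)) →
      Tendsto h l (𝓝 m) → Tendsto (fun y => g y * ‖v y‖ ^ 2) l (𝓝 ⟪v x, m⟫) :=
    fun hvx hhm => (hvx.inner hhm).congr fun y => by
      simp only [h, real_inner_smul_right, real_inner_self_eq_norm_sq]
  have hv_lim : ∀ x ∈ Icc a b, Tendsto v (𝓝[Ioo a b] x) (𝓝 (v x)) :=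
    fun x hx => (hv_cont x hx).mono Ioo_subset_Icc_self
  have hFTC := intervalIntegral.integral_eq_sub_of_hasDerivAt_of_tendsto hab hD
    ((intervalIntegrable_iff_integrableOn_Ioo_of_le hab.le).2 hD_int)
    (hlim (nhdsWithin_Ioo_eq_nhdsGT hab ▸ hv_lim a (left_mem_Icc.2 hab.le)) ha)
    (hlim (nhdsWithin_Ioo_eq_nhdsLT hab ▸ hv_lim b (right_mem_Icc.2 hab.le)) hb)
  rw [intervalIntegral.integral_of_le hab.le, integral_Ioc_eq_integral_Ioo] at hFTC
  have hpointwise : ∀ y ∈ Ioo a b, ρ y * ‖v y‖ ^ 2 ≤ ‖v' y‖ ^ 2 - D y := fun y _ => by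
    have := norm_sub_sq_real (v' y) (h y)
    rw [real_inner_comm] at this
    linarith [sq_nonneg ‖v' y - h y‖]
  have := setIntegral_mono_on hρ (hv'.sub hD_int : IntegrableOn (fun y => ‖v' y‖ ^ 2 - D y) _)
    measurableSet_Ioo hpointwise
  rw [integral_sub hv' hD_int, hFTC] at this
  linarith

theorem hasDerivAt_inv_two_mul_sub {c y : ℝ} (hy : y ≠ c) :
    HasDerivAt (fun y => (2 * (y - c))⁻¹) (-((2 * (y - c))⁻¹ ^ 2 + (2 * (y - c))⁻¹ ^ 2)) y := by
  have := sub_ne_zero.2 hy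
  refine (((hasDerivAt_id y).sub_const c).const_mul 2).inv (by positivity) |>.congr_deriv ?_
  simp only [id]
  field_simp
  ring

theorem hardy_inequality [CompleteSpace E] (hab : a < b) {c : ℝ} (hc : c = a ∨ c = b)
    {v v' : ℝ → E} (hv : ∀ y ∈ Icc a b, HasDerivAt v (v' y) y) (hvc : v c = 0)
    (hv' : IntegrableOn (fun y => ‖v' y‖ ^ 2) (Ioo a b)) :
    IntegrableOn (fun y => ‖v y‖ ^ 2 / (y - c) ^ 2) (Ioo a b) ∧
      ∫ y in Ioo a b, ‖v y‖ ^ 2 / (y - c) ^ 2 ≤ 4 * ∫ y in Ioo a b, ‖v' y‖ ^ 2 := by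
  have hc_mem : c ∈ Icc a b := by rcases hc with rfl | rfl <;> simp [hab.le]
  have hc_nmem : ∀ y ∈ Ioo a b, y ≠ c := by
    rintro y hy rfl; rcases hc with rfl | rfl <;> simp at hy
  have hd := continuousOn_dslope_Icc hv hc_mem
  have hdslope : ∀ y ∈ Ioo a b, (y - c)⁻¹ • v y = dslope v c y := fun y hy => by
    rw [dslope_of_ne _ (hc_nmem y hy), slope_def_module, hvc, sub_zero]
  have hint : IntegrableOn (fun y => ‖v y‖ ^ 2 / (y - c) ^ 2) (Ioo a b) := by
    refine ((hd.norm.pow 2).integrableOn_Icc.mono_set Ioo_subset_Icc_self).congr_fun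
      (fun y hy => ?_) measurableSet_Ioo
    rw [Pi.pow_apply, ← hdslope y hy, norm_smul, mul_pow, norm_inv, Real.norm_eq_abs, inv_pow,
      sq_abs, inv_mul_eq_div]
  set g : ℝ → ℝ := fun y => (2 * (y - c))⁻¹
  have hg : ∀ y ∈ Ioo a b, HasDerivAt g (-(g y ^ 2 + g y ^ 2)) y :=
    fun y hy => hasDerivAt_inv_two_mul_sub (hc_nmem y hy)
  have hgv : ∀ y ∈ Ioo a b, g y • v y = (2 : ℝ)⁻¹ • dslope v c y := fun y hy => by
    rw [← hdslope y hy, smul_smul, ← mul_inv]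
  have hlim : ∀ x ∈ Icc a b, Tendsto (fun y => g y • v y) (𝓝[Ioo a b] x)
      (𝓝 ((2 : ℝ)⁻¹ • dslope v c x)) := fun x hx =>
    (((hd x hx).mono Ioo_subset_Icc_self).const_smul _).congr' <|
      eventually_nhdsWithin_of_forall fun y hy => (hgv y hy).symm
  have hρ : ∀ y ∈ Ioo a b, g y ^ 2 * ‖v y‖ ^ 2 = ‖v y‖ ^ 2 / (y - c) ^ 2 / 4 := fun y hy => by
    have := sub_ne_zero.2 (hc_nmem y hy)
    simp only [g]
    field_simp
    ring
  have hpicone := picone_inequality hab (HasDerivAt.continuousOn hv)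
    (fun y hy => hv y (Ioo_subset_Icc_self hy)) hg
    (nhdsWithin_Ioo_eq_nhdsGT hab ▸ hlim a (left_mem_Icc.2 hab.le))
    (nhdsWithin_Ioo_eq_nhdsLT hab ▸ hlim b (right_mem_Icc.2 hab.le)) hv'
    (IntegrableOn.congr_fun (hint.div_const 4) (fun y hy => (hρ y hy).symm) measurableSet_Ioo)
  rw [setIntegral_congr_fun measurableSet_Ioo hρ, integral_div] at hpicone
  have hboundary : 0 ≤ ⟪v b, (2 : ℝ)⁻¹ • dslope v c b⟫ - ⟪v a, (2 : ℝ)⁻¹ • dslope v c a⟫ := by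
    simp only [real_inner_smul_right, inner_dslope_of_eq_zero hvc]
    have hb := mul_nonneg (inv_nonneg.2 (sub_nonneg.2 hc_mem.2)) (sq_nonneg ‖v b‖)
    have ha := mul_nonpos_of_nonpos_of_nonneg (inv_nonpos.2 (sub_nonpos.2 hc_mem.1))
      (sq_nonneg ‖v a‖)
    linarith
  exact ⟨hint, by linarith⟩

theorem hasDerivAt_mul_cos_div_sin (k a : ℝ) {y : ℝ} (hy : sin (k * (y - a)) ≠ 0) :
    HasDerivAt (fun y => k * cos (k * (y - a)) / sin (k * (y - a)))
      (-((k * cos (k * (y - a)) / sin (k * (y - a))) ^ 2 + k ^ 2)) y := by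
  have hlin : HasDerivAt (fun y => k * (y - a)) k y := by
    simpa using ((hasDerivAt_id y).sub_const a).const_mul k
  refine ((hlin.cos.const_mul k).div hlin.sin hy).congr_deriv ?_
  field_simp
  ring

theorem wirtinger_inequality [CompleteSpace E] (hab : a < b) {v v' : ℝ → E}
    (hv : ∀ y ∈ Icc a b, HasDerivAt v (v' y) y) (hva : v a = 0) (hvb : v b = 0)
    (hv' : IntegrableOn (fun y => ‖v' y‖ ^ 2) (Ioo a b)) :
    π ^ 2 * ∫ y in Ioo a b, ‖v y‖ ^ 2 ≤ (b - a) ^ 2 * ∫ y in Ioo a b, ‖v' y‖ ^ 2 := by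
  set k := π / (b - a)
  have hk : 0 < k := div_pos pi_pos (sub_pos.2 hab)
  have hkba : k * (b - a) = π := div_mul_cancel₀ π (sub_pos.2 hab).ne'
  set S : ℝ → ℝ := fun y => sin (k * (y - a))
  set g : ℝ → ℝ := fun y => k * cos (k * (y - a)) / S y
  have hS : ∀ y, HasDerivAt S (k * cos (k * (y - a))) y := fun y => by
    simpa [mul_comm] using (((hasDerivAt_id y).sub_const a).const_mul k).sin
  have hS_pos : ∀ y ∈ Ioo a b, 0 < S y := fun y hy => by
    refine sin_pos_of_pos_of_lt_pi (mul_pos hk (sub_pos.2 hy.1)) ?_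
    calc k * (y - a) < k * (b - a) := by gcongr; exact hy.2
      _ = π := hkba
  have hg : ∀ y ∈ Ioo a b, HasDerivAt g (-(g y ^ 2 + k ^ 2)) y :=
    fun y hy => hasDerivAt_mul_cos_div_sin k a (hS_pos y hy).ne'
  have hlim : ∀ x ∈ Icc a b, v x = 0 → S x = 0 →
      ∃ m, Tendsto (fun y => g y • v y) (𝓝[≠] x) (𝓝 m) := by
    intro x hx hvx hSx
    have hcos : cos (k * (x - a)) ≠ 0 := fun h => by
      simpa [S, hSx, h] using sin_sq_add_cos_sq (k * (x - a))
    have hk_cos : Tendsto (fun y => k * cos (k * (y - a))) (𝓝[≠] x)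
        (𝓝 (k * cos (k * (x - a)))) :=
      (Continuous.tendsto (by fun_prop) x).mono_left nhdsWithin_le_nhds
    refine ⟨_, (hk_cos.smul (tendsto_inv_smul_of_hasDerivAt (hS x) (hv x hx) hSx hvx
      (mul_ne_zero hk.ne' hcos))).congr fun y => ?_⟩
    simp only [g, smul_smul, div_eq_mul_inv]
  obtain ⟨ma, hma⟩ := hlim a (left_mem_Icc.2 hab.le) hva (by simp [S])
  obtain ⟨mb, hmb⟩ := hlim b (right_mem_Icc.2 hab.le) hvb (by simp [S, hkba])
  have hv_cont : ContinuousOn v (Icc a b) := HasDerivAt.continuousOn hv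
  have hpicone := picone_inequality hab hv_cont (fun y hy => hv y (Ioo_subset_Icc_self hy)) hg
    (hma.mono_left (nhdsWithin_mono _ fun y hy => ne_of_gt hy))
    (hmb.mono_left (nhdsWithin_mono _ fun y hy => ne_of_lt hy)) hv'
    (((hv_cont.norm.pow 2).integrableOn_Icc.mono_set Ioo_subset_Icc_self).const_mul (k ^ 2))
  rw [hva, hvb, inner_zero_left, inner_zero_left, sub_zero, zero_add,
    integral_const_mul] at hpicone
  calc π ^ 2 * ∫ y in Ioo a b, ‖v y‖ ^ 2
      = (b - a) ^ 2 * (k ^ 2 * ∫ y in Ioo a b, ‖v y‖ ^ 2) := by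
        rw [← mul_assoc, ← mul_pow, mul_comm (b - a), hkba]
    _ ≤ (b - a) ^ 2 * ∫ y in Ioo a b, ‖v' y‖ ^ 2 := by gcongr

theorem integrableOn_norm_sq_sin_smul_add_cos_smul [CompleteSpace E] {w w' : ℝ → E}
    (hw : ∀ y ∈ Icc a b, HasDerivAt w (w' y) y)
    (hw' : IntegrableOn (fun y => ‖w' y‖ ^ 2 * sin y ^ 2) (Ioo a b)) :
    IntegrableOn (fun y => ‖sin y • w' y + cos y • w y‖ ^ 2) (Ioo a b) := by
  have hw_cont : ContinuousOn w (Icc a b) := HasDerivAt.continuousOn hw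
  obtain ⟨C, hC⟩ := isCompact_Icc.exists_bound_of_continuousOn hw_cont
  have hmeas : AEStronglyMeasurable (fun y => sin y • w' y + cos y • w y)
      (volume.restrict (Ioo a b)) :=
    (continuous_sin.aestronglyMeasurable.smul (aestronglyMeasurable_of_hasDerivAt
      measurableSet_Ioo fun y hy => hw y (Ioo_subset_Icc_self hy))).add
      (continuous_cos.aestronglyMeasurable.smul
        ((hw_cont.mono Ioo_subset_Icc_self).aestronglyMeasurable measurableSet_Ioo))
  refine ((hw'.const_mul 2).add (integrableOn_const (C := 2 * C ^ 2)
    measure_Ioo_lt_top.ne)).mono' (hmeas.norm.pow 2)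
    ((ae_restrict_iff' measurableSet_Ioo).2 (ae_of_all _ fun y hy => ?_))
  have hcos : ‖cos y • w y‖ ≤ C := by
    rw [norm_smul, Real.norm_eq_abs]
    exact (mul_le_of_le_one_left (norm_nonneg _) (abs_cos_le_one y)).trans
      (hC y (Ioo_subset_Icc_self hy))
  have hsin : ‖sin y • w' y‖ ^ 2 = ‖w' y‖ ^ 2 * sin y ^ 2 := by
    rw [norm_smul, mul_pow, Real.norm_eq_abs, sq_abs, mul_comm]
  have := norm_add_sq_real (sin y • w' y) (cos y • w y)
  have := norm_sub_sq_real (sin y • w' y) (cos y • w y)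
  rw [norm_pow, norm_norm, Pi.add_apply]
  nlinarith [norm_nonneg (cos y • w y), sq_nonneg ‖sin y • w' y - cos y • w y‖]

theorem integral_norm_sq_sin_smul_add_cos_smul [CompleteSpace E] (hab : a ≤ b) {w w' : ℝ → E}
    (hw : ∀ y ∈ Icc a b, HasDerivAt w (w' y) y) (ha : sin a • w a = 0) (hb : sin b • w b = 0)
    (hw' : IntegrableOn (fun y => ‖w' y‖ ^ 2 * sin y ^ 2) (Ioo a b)) :
    ∫ y in Ioo a b, ‖sin y • w' y + cos y • w y‖ ^ 2 =
      (∫ y in Ioo a b, ‖w' y‖ ^ 2 * sin y ^ 2) + ∫ y in Ioo a b, ‖sin y • w y‖ ^ 2 := by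
  have hv' := integrableOn_norm_sq_sin_smul_add_cos_smul hw hw'
  have hv : IntegrableOn (fun y => ‖sin y • w y‖ ^ 2) (Ioo a b) :=
    (((continuous_sin.continuousOn.smul (HasDerivAt.continuousOn hw)).norm.pow 2).integrableOn_Icc
      ).mono_set Ioo_subset_Icc_self
  have hderiv : ∀ y ∈ uIcc a b, HasDerivAt (fun y => sin y * cos y * ‖w y‖ ^ 2)
      (‖sin y • w' y + cos y • w y‖ ^ 2 - ‖w' y‖ ^ 2 * sin y ^ 2 - ‖sin y • w y‖ ^ 2) y := by
    intro y hy
    rw [uIcc_of_le hab] at hy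
    refine (((hasDerivAt_sin y).fun_mul (hasDerivAt_cos y)).fun_mul
      (hw y hy).norm_sq).congr_deriv ?_
    rw [norm_add_sq_real]
    simp only [norm_smul, real_inner_smul_right, mul_pow, Real.norm_eq_abs, sq_abs,
      real_inner_comm (w y)]
    ring
  have hboundary : ∀ x, sin x • w x = 0 → sin x * cos x * ‖w x‖ ^ 2 = 0 := fun x hx => by
    rcases smul_eq_zero.1 hx with h | h <;> simp [h]
  have hv'w' : IntegrableOn
      (fun y => ‖sin y • w' y + cos y • w y‖ ^ 2 - ‖w' y‖ ^ 2 * sin y ^ 2) (Ioo a b) :=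
    hv'.sub hw'
  have hFTC := intervalIntegral.integral_eq_sub_of_hasDerivAt hderiv
    ((intervalIntegrable_iff_integrableOn_Ioo_of_le hab).2 (hv'w'.sub hv))
  rw [intervalIntegral.integral_of_le hab, integral_Ioc_eq_integral_Ioo, hboundary a ha,
    hboundary b hb, sub_zero, integral_sub hv'w' hv, integral_sub hv' hw'] at hFTC
  linarith

theorem weighted_hardy_sin_sq_Ioo [CompleteSpace E] (hab : a < b) {c M : ℝ}
    (hc : c = a ∨ c = b) {w w' : ℝ → E} (hw : ∀ y ∈ Icc a b, HasDerivAt w (w' y) y)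
    (ha : sin a • w a = 0) (hb : sin b • w b = 0)
    (hw' : IntegrableOn (fun y => ‖w' y‖ ^ 2 * sin y ^ 2) (Ioo a b))
    (hM : (b - a) ^ 2 ≤ M) (hMπ : M < π ^ 2) :
    IntegrableOn (fun y => ‖w y‖ ^ 2 * sin y ^ 2 / (y - c) ^ 2) (Ioo a b) ∧
      ∫ y in Ioo a b, ‖w y‖ ^ 2 * sin y ^ 2 / (y - c) ^ 2 ≤
        4 * π ^ 2 / (π ^ 2 - M) * ∫ y in Ioo a b, ‖w' y‖ ^ 2 * sin y ^ 2 := by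
  have hv : ∀ y ∈ Icc a b, HasDerivAt (fun y => sin y • w y) (sin y • w' y + cos y • w y) y :=
    fun y hy => (hasDerivAt_sin y).smul (hw y hy)
  have hvc : sin c • w c = 0 := by rcases hc with rfl | rfl <;> assumption
  have hv' := integrableOn_norm_sq_sin_smul_add_cos_smul hw hw'
  obtain ⟨hint, hhardy⟩ := hardy_inequality hab hc hv hvc hv'
  have hwirtinger := wirtinger_inequality hab hv ha hb hv'
  have hidentity := integral_norm_sq_sin_smul_add_cos_smul hab.le hw ha hb hw'
  have hnorm : ∀ y, ‖sin y • w y‖ ^ 2 = ‖w y‖ ^ 2 * sin y ^ 2 := fun y => by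
    rw [norm_smul, mul_pow, Real.norm_eq_abs, sq_abs, mul_comm]
  simp only [hnorm] at hint hhardy
  refine ⟨hint, ?_⟩
  have hA : 0 ≤ ∫ y in Ioo a b, ‖sin y • w' y + cos y • w y‖ ^ 2 :=
    setIntegral_nonneg measurableSet_Ioo fun y _ => sq_nonneg _
  have hπM : 0 < π ^ 2 - M := sub_pos.2 hMπ
  rw [div_mul_eq_mul_div, le_div_iff₀ hπM]
  nlinarith [mul_le_mul_of_nonneg_right hM hA, mul_le_mul_of_nonneg_right hhardy hπM.le]

end

/-- Lemma 7.3: weighted one-dimensional Hardy inequality with weight `sin² y`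
centered at an interior point `y₀` of `(0, π)`. -/
theorem weighted_hardy_sin_sq (y₀ : ℝ) (hy₀ : y₀ ∈ Set.Ioo 0 π) (u : ℝ → ℂ)
    (hu_diff : ∀ y ∈ Set.Icc 0 π, DifferentiableAt ℝ u y)
    (hu_deriv_L2 : IntegrableOn (fun y => ‖deriv u y‖ ^ 2 * (sin y) ^ 2) (Set.Ioo 0 π))
    (hu0 : u y₀ = 0) :
    ∫ y in Set.Ioo 0 π, ‖u y‖ ^ 2 * (sin y) ^ 2 / (y - y₀) ^ 2
      ≤ (4 * π ^ 2 / (π ^ 2 - max (y₀ ^ 2) ((π - y₀) ^ 2))) *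
        ∫ y in Set.Ioo 0 π, ‖deriv u y‖ ^ 2 * (sin y) ^ 2 := by
  obtain ⟨h0, hπ⟩ := hy₀
  have hu : ∀ y ∈ Icc 0 π, HasDerivAt u (deriv u y) y := fun y hy => (hu_diff y hy).hasDerivAt
  have hMπ : max (y₀ ^ 2) ((π - y₀) ^ 2) < π ^ 2 := max_lt
    (pow_lt_pow_left₀ hπ h0.le two_ne_zero)
    (pow_lt_pow_left₀ (by linarith) (by linarith) two_ne_zero)
  have hleft_sub : Ioo 0 y₀ ⊆ Ioo 0 π := Ioo_subset_Ioo le_rfl hπ.le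
  have hright_sub : Ioo y₀ π ⊆ Ioo 0 π := Ioo_subset_Ioo h0.le le_rfl
  obtain ⟨hI₁, hleft⟩ := weighted_hardy_sin_sq_Ioo h0 (Or.inr rfl)
    (fun y hy => hu y (Icc_subset_Icc le_rfl hπ.le hy)) (by simp) (by simp [hu0])
    (hu_deriv_L2.mono_set hleft_sub) (by rw [sub_zero]; exact le_max_left _ _) hMπ
  obtain ⟨hI₂, hright⟩ := weighted_hardy_sin_sq_Ioo hπ (Or.inl rfl)
    (fun y hy => hu y (Icc_subset_Icc h0.le le_rfl hy)) (by simp [hu0]) (by simp)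
    (hu_deriv_L2.mono_set hright_sub) (le_max_right _ _) hMπ
  rw [← setIntegral_Ioo_add_setIntegral_Ioo h0.le hπ.le hI₁ hI₂,
    ← setIntegral_Ioo_add_setIntegral_Ioo h0.le hπ.le (hu_deriv_L2.mono_set hleft_sub)
      (hu_deriv_L2.mono_set hright_sub), mul_add]
  exact add_le_add hleft hright
end

section
/- Let y₀ ∈ (0, π), R > 0 with R < min{y₀, π − y₀}, m = R/√2, and c₁₅ = 18 + 32π²/R². For any y ∈ (0, π), y ≠ y₀, and any u ∈ H₀¹(ℝ) (in the x variable), one has ∫_ℝ |u(x)|²/(x² + (y − y₀)²) dx ≤ 16 ∫_ℝ |u'(x)|² dx + c₁₅ ∫_{−m}^{m} |u(x)|²/(x² + (y − y₀)²) dx. -/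
/-!
For `0 < s < x`, the function `-‖u‖²/x` has derivative `‖u‖²/x² - 2⟪u, u'⟫/x`, which by
Cauchy–Schwarz and AM-GM is at least `‖u‖²/(2x²) - 2‖u'‖²`. Integrating gives the Hardy-type
bound `∫_{x>s} ‖u‖²/x² ≤ 2‖u(s)‖²/s + 4∫_{x>s} ‖u'‖²` with no boundary condition at `0`.
Taking `s ∈ [m/2, m]` where `‖u‖²` is smallest bounds `2‖u(s)‖²/s` by `(8/m²)∫_{m/2}^{m} ‖u‖²`,
and this is at most `(8/m²)(m² + (y - y₀)²) = 8 + 16(y - y₀)²/R²` times the local integral.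
The half-line `x < -m` is the same estimate for `x ↦ u(-x)`.
-/

open MeasureTheory Real Set Filter intervalIntegral
open scoped RealInnerProductSpace

variable {E : Type*} [NormedAddCommGroup E] [InnerProductSpace ℝ E]

theorem two_mul_inner_div_le (a b : E) {x : ℝ} (hx : 0 < x) :
    2 * ⟪a, b⟫ / x ≤ ‖a‖ ^ 2 / x ^ 2 / 2 + 2 * ‖b‖ ^ 2 := by
  have cauchy_schwarz : 2 * ⟪a, b⟫ / x ≤ 2 * (‖a‖ * ‖b‖) / x := by
    gcongr
    exact real_inner_le_norm a b
  have amgm : ‖a‖ ^ 2 / x ^ 2 / 2 + 2 * ‖b‖ ^ 2 - 2 * (‖a‖ * ‖b‖) / x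
      = (‖a‖ / x - 2 * ‖b‖) ^ 2 / 2 := by
    field_simp
    ring
  nlinarith [sq_nonneg (‖a‖ / x - 2 * ‖b‖)]

theorem intervalIntegral_norm_sq_div_sq_le {u : ℝ → E} (hu : Differentiable ℝ u) {s t : ℝ}
    (hs : 0 < s) (hst : s ≤ t) (hg : IntegrableOn (fun x => ‖deriv u x‖ ^ 2) (Ioi s)) :
    ∫ x in s..t, ‖u x‖ ^ 2 / x ^ 2
      ≤ 2 * ‖u s‖ ^ 2 / s + 4 * ∫ x in Ioi s, ‖deriv u x‖ ^ 2 := by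
  have hpos : ∀ x ∈ Icc s t, 0 < x := fun x hx => hs.trans_le hx.1
  have hw : IntervalIntegrable (fun x => ‖u x‖ ^ 2 / x ^ 2) volume s t :=
    (ContinuousOn.intervalIntegrable_of_Icc hst <| (hu.continuous.norm.pow 2).continuousOn.div
      (continuous_pow 2).continuousOn fun x hx => (pow_pos (hpos x hx) 2).ne')
  have hg' : IntervalIntegrable (fun x => ‖deriv u x‖ ^ 2) volume s t :=
    (intervalIntegrable_iff_integrableOn_Ioc_of_le hst).2 (hg.mono_set Ioc_subset_Ioi_self)
  have key := integral_le_sub_of_hasDeriv_right_of_le hst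
    (g := fun x => -(‖u x‖ ^ 2 / x))
    (g' := fun x => ‖u x‖ ^ 2 / x ^ 2 - 2 * ⟪u x, deriv u x⟫ / x)
    (φ := fun x => ‖u x‖ ^ 2 / x ^ 2 / 2 - 2 * ‖deriv u x‖ ^ 2)
    ((hu.continuous.norm.pow 2).continuousOn.div continuousOn_id
      (fun x hx => (hpos x hx).ne')).neg
    (fun x hx => by
      have hx0 := hpos x (Ioo_subset_Icc_self hx)
      have h := ((hu x).hasDerivAt.norm_sq.div (hasDerivAt_id' x) hx0.ne').neg
      refine (h.congr_deriv ?_).hasDerivWithinAt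
      field_simp
      ring)
    ((intervalIntegrable_iff_integrableOn_Icc_of_le hst).1 ((hw.div_const 2).sub (hg'.const_mul 2)))
    (fun x hx => by
      have := two_mul_inner_div_le (u x) (deriv u x) (hpos x (Ioo_subset_Icc_self hx))
      linarith)
  rw [integral_sub (hw.div_const 2) (hg'.const_mul 2),
    intervalIntegral.integral_div, intervalIntegral.integral_const_mul] at key
  have hgt : ∫ x in s..t, ‖deriv u x‖ ^ 2 ≤ ∫ x in Ioi s, ‖deriv u x‖ ^ 2 := by
    rw [integral_of_le hst]
    exact setIntegral_mono_set hg (.of_forall fun _ => by positivity)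
      (.of_forall Ioc_subset_Ioi_self)
  have ht : 0 ≤ ‖u t‖ ^ 2 / t := div_nonneg (by positivity) (hs.trans_le hst).le
  rw [mul_div_assoc]
  linarith

theorem integrableOn_Ioi_norm_sq_div_sq {u : ℝ → E} (hu : Differentiable ℝ u) {s : ℝ}
    (hs : 0 < s) (hg : IntegrableOn (fun x => ‖deriv u x‖ ^ 2) (Ioi s)) :
    IntegrableOn (fun x => ‖u x‖ ^ 2 / x ^ 2) (Ioi s) := by
  refine integrableOn_Ioi_of_intervalIntegral_norm_bounded
    (2 * ‖u s‖ ^ 2 / s + 4 * ∫ x in Ioi s, ‖deriv u x‖ ^ 2) s (fun t => ?_) tendsto_id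
    (eventually_ge_atTop s |>.mono fun t hst => ?_)
  · refine (ContinuousOn.integrableOn_Icc ?_).mono_set Ioc_subset_Icc_self
    exact (hu.continuous.norm.pow 2).continuousOn.div (continuous_pow 2).continuousOn
      fun x hx => (pow_pos (hs.trans_le hx.1) 2).ne'
  · have hnorm (x : ℝ) : ‖‖u x‖ ^ 2 / x ^ 2‖ = ‖u x‖ ^ 2 / x ^ 2 :=
      Real.norm_of_nonneg (by positivity)
    simpa only [id, hnorm] using intervalIntegral_norm_sq_div_sq_le hu hs hst hg

theorem integral_Ioi_norm_sq_div_sq_le {u : ℝ → E} (hu : Differentiable ℝ u) {s : ℝ}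
    (hs : 0 < s) (hg : IntegrableOn (fun x => ‖deriv u x‖ ^ 2) (Ioi s)) :
    ∫ x in Ioi s, ‖u x‖ ^ 2 / x ^ 2
      ≤ 2 * ‖u s‖ ^ 2 / s + 4 * ∫ x in Ioi s, ‖deriv u x‖ ^ 2 :=
  le_of_tendsto
    (intervalIntegral_tendsto_integral_Ioi s (integrableOn_Ioi_norm_sq_div_sq hu hs hg) tendsto_id)
    (eventually_ge_atTop s |>.mono fun _ hst => intervalIntegral_norm_sq_div_sq_le hu hs hst hg)

theorem exists_mul_sub_le_intervalIntegral {f : ℝ → ℝ} {a b : ℝ} (hab : a ≤ b)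
    (hf : ContinuousOn f (Icc a b)) : ∃ c ∈ Icc a b, f c * (b - a) ≤ ∫ x in a..b, f x := by
  obtain ⟨c, hc, hmin⟩ := isCompact_Icc.exists_isMinOn (nonempty_Icc.2 hab) hf
  refine ⟨c, hc, ?_⟩
  calc f c * (b - a) = ∫ _ in a..b, f c := by simp [mul_comm]
    _ ≤ ∫ x in a..b, f x :=
      integral_mono_on hab intervalIntegrable_const (hf.intervalIntegrable_of_Icc hab) hmin

theorem integral_Ioi_norm_sq_div_sq_add_le {u : ℝ → E} (hu : Differentiable ℝ u) {m c : ℝ}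
    (hm : 0 < m) (hc : 0 ≤ c) (hg : IntegrableOn (fun x => ‖deriv u x‖ ^ 2) (Ioi 0)) :
    ∫ x in Ioi m, ‖u x‖ ^ 2 / (x ^ 2 + c)
      ≤ 8 / m ^ 2 * (∫ x in m / 2..m, ‖u x‖ ^ 2) + 4 * ∫ x in Ioi 0, ‖deriv u x‖ ^ 2 := by
  obtain ⟨s, ⟨hms, hsm⟩, hus⟩ := exists_mul_sub_le_intervalIntegral
    (f := fun x => ‖u x‖ ^ 2) (a := m / 2) (b := m) (by linarith)
    (hu.continuous.norm.pow 2).continuousOn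
  have hs : 0 < s := by linarith
  have hgs : IntegrableOn (fun x => ‖deriv u x‖ ^ 2) (Ioi s) := hg.mono_set (Ioi_subset_Ioi hs.le)
  have hint := integrableOn_Ioi_norm_sq_div_sq hu hs hgs
  have boundary : 2 * ‖u s‖ ^ 2 / s ≤ 8 / m ^ 2 * ∫ x in m / 2..m, ‖u x‖ ^ 2 := by
    calc 2 * ‖u s‖ ^ 2 / s ≤ 2 * ‖u s‖ ^ 2 / (m / 2) := by gcongr
      _ = 8 / m ^ 2 * (‖u s‖ ^ 2 * (m - m / 2)) := by field_simp; ring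
      _ ≤ 8 / m ^ 2 * ∫ x in m / 2..m, ‖u x‖ ^ 2 := by gcongr
  calc ∫ x in Ioi m, ‖u x‖ ^ 2 / (x ^ 2 + c)
      ≤ ∫ x in Ioi m, ‖u x‖ ^ 2 / x ^ 2 := by
        refine integral_mono_of_nonneg (.of_forall fun x => by positivity)
          (hint.mono_set (Ioi_subset_Ioi hsm)) ?_
        filter_upwards [ae_restrict_mem measurableSet_Ioi] with x hx
        have : 0 < x := hm.trans hx
        gcongr
        linarith
    _ ≤ ∫ x in Ioi s, ‖u x‖ ^ 2 / x ^ 2 :=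
        setIntegral_mono_set hint (.of_forall fun x => by positivity)
          (.of_forall (Ioi_subset_Ioi hsm))
    _ ≤ 2 * ‖u s‖ ^ 2 / s + 4 * ∫ x in Ioi s, ‖deriv u x‖ ^ 2 :=
        integral_Ioi_norm_sq_div_sq_le hu hs hgs
    _ ≤ 8 / m ^ 2 * (∫ x in m / 2..m, ‖u x‖ ^ 2) + 4 * ∫ x in Ioi 0, ‖deriv u x‖ ^ 2 := by
        gcongr ?_ + 4 * ?_
        exact setIntegral_mono_set hg (.of_forall fun x => by positivity)
          (.of_forall (Ioi_subset_Ioi hs.le))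

theorem integral_Iic_norm_sq_div_sq_add_le {u : ℝ → E} (hu : Differentiable ℝ u) {m c : ℝ}
    (hm : 0 < m) (hc : 0 ≤ c) (hg : Integrable (fun x => ‖deriv u x‖ ^ 2)) :
    ∫ x in Iic (-m), ‖u x‖ ^ 2 / (x ^ 2 + c)
      ≤ 8 / m ^ 2 * (∫ x in -m..-(m / 2), ‖u x‖ ^ 2) + 4 * ∫ x in Iic 0, ‖deriv u x‖ ^ 2 := by
  have hderiv (x : ℝ) : ‖deriv (fun x => u (-x)) x‖ ^ 2 = ‖deriv u (-x)‖ ^ 2 := by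
    rw [deriv_comp_neg, norm_neg]
  have h := integral_Ioi_norm_sq_div_sq_add_le (u := fun x => u (-x))
    (hu.comp differentiable_neg) hm hc
    (by simpa only [hderiv] using hg.comp_neg.integrableOn)
  have e₁ : ∫ x in Ioi m, ‖u (-x)‖ ^ 2 / (x ^ 2 + c)
      = ∫ x in Iic (-m), ‖u x‖ ^ 2 / (x ^ 2 + c) := by
    rw [← integral_comp_neg_Ioi]
    simp only [neg_sq]
  have e₂ : ∫ x in m / 2..m, ‖u (-x)‖ ^ 2 = ∫ x in -m..-(m / 2), ‖u x‖ ^ 2 :=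
    integral_comp_neg fun x => ‖u x‖ ^ 2
  have e₃ : ∫ x in Ioi 0, ‖deriv u (-x)‖ ^ 2 = ∫ x in Iic 0, ‖deriv u x‖ ^ 2 := by
    simpa only [neg_zero] using integral_comp_neg_Ioi 0 fun x => ‖deriv u x‖ ^ 2
  simp only [hderiv] at h
  rwa [e₁, e₂, e₃] at h

theorem intervalIntegral_le_mul_integral_Ioo_div_sq_add {f : ℝ → ℝ} (hf : Continuous f)
    (hf₀ : ∀ x, 0 ≤ f x) {a b m c : ℝ} (hc : 0 < c) (hma : -m ≤ a) (hab : a ≤ b) (hbm : b ≤ m) :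
    ∫ x in a..b, f x ≤ (m ^ 2 + c) * ∫ x in Ioo (-m) m, f x / (x ^ 2 + c) := by
  have hF : Continuous fun x => f x / (x ^ 2 + c) :=
    hf.div (by fun_prop) fun x => by positivity
  calc ∫ x in a..b, f x ≤ ∫ x in a..b, (m ^ 2 + c) * (f x / (x ^ 2 + c)) := by
        refine integral_mono_on hab (hf.intervalIntegrable _ _)
          ((hF.intervalIntegrable _ _).const_mul _) fun x hx => ?_
        have hx2 : x ^ 2 ≤ m ^ 2 := sq_le_sq' (by linarith [hx.1]) (by linarith [hx.2])
        rw [mul_div_assoc', le_div_iff₀ (by positivity)]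
        nlinarith [mul_le_mul_of_nonneg_left hx2 (hf₀ x)]
    _ ≤ ∫ x in -m..m, (m ^ 2 + c) * (f x / (x ^ 2 + c)) :=
        integral_mono_interval hma hab hbm (.of_forall fun x => by positivity [hf₀ x])
          ((hF.intervalIntegrable _ _).const_mul _)
    _ = (m ^ 2 + c) * ∫ x in Ioo (-m) m, f x / (x ^ 2 + c) := by
        rw [intervalIntegral.integral_const_mul, integral_of_le (by linarith),
          integral_Ioc_eq_integral_Ioo]

theorem Integrable.div_sq_add {f : ℝ → ℝ} (hf : Integrable f) {c : ℝ} (hc : 0 < c) :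
    Integrable fun x => f x / (x ^ 2 + c) := by
  simp_rw [div_eq_mul_inv]
  refine hf.mul_bdd (c := c⁻¹)
    ((by fun_prop : Continuous fun x : ℝ => x ^ 2 + c).inv₀
      fun x => by positivity).aestronglyMeasurable
    (.of_forall fun x => ?_)
  rw [norm_inv, Real.norm_of_nonneg (by positivity)]
  exact inv_anti₀ hc (le_add_of_nonneg_left (sq_nonneg x))

theorem integral_eq_integral_Iic_add_integral_Ioo_add_integral_Ioi {F : Type*}
    [NormedAddCommGroup F] [NormedSpace ℝ F] {f : ℝ → F} (hf : Integrable f) {a b : ℝ}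
    (hab : a ≤ b) :
    ∫ x, f x = (∫ x in Iic a, f x) + (∫ x in Ioo a b, f x) + ∫ x in Ioi b, f x := by
  rw [← integral_Iic_add_Ioi (b := b) hf.integrableOn hf.integrableOn,
    ← integral_Ioc_eq_integral_Ioo, ← integral_of_le hab,
    ← integral_Iic_sub_Iic hf.integrableOn hf.integrableOn]
  abel

theorem one_dim_splitting_estimate_general (y₀ : ℝ) (hy₀ : y₀ ∈ Set.Ioo 0 π)
    (R : ℝ) (hR : 0 < R)
    (y : ℝ) (hy : y ∈ Set.Ioo 0 π) (hyne : y ≠ y₀)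
    (u : ℝ → ℂ)
    (hu_diff : Differentiable ℝ u)
    (hu_L2 : MemLp u 2 volume)
    (hu_deriv_L2 : MemLp (deriv u) 2 volume) :
    ∫ x : ℝ, ‖u x‖ ^ 2 / (x ^ 2 + (y - y₀) ^ 2)
      ≤ 16 * (∫ x : ℝ, ‖deriv u x‖ ^ 2) +
        (18 + 32 * π ^ 2 / R ^ 2) *
          ∫ x in Set.Ioo (-(R / Real.sqrt 2)) (R / Real.sqrt 2),
            ‖u x‖ ^ 2 / (x ^ 2 + (y - y₀) ^ 2) := by
  set m := R / √2
  set c := (y - y₀) ^ 2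
  have hm : 0 < m := by positivity
  have hc : 0 < c := by have := sub_ne_zero.2 hyne; positivity
  have hcπ : c ≤ π ^ 2 := sq_le_sq' (by linarith [hy.1, hy₀.2]) (by linarith [hy.2, hy₀.1])
  have hF : Integrable fun x => ‖u x‖ ^ 2 / (x ^ 2 + c) :=
    Integrable.div_sq_add (hu_L2.integrable_norm_pow two_ne_zero) hc
  have hg : Integrable fun x => ‖deriv u x‖ ^ 2 := hu_deriv_L2.integrable_norm_pow two_ne_zero
  have hsplit_deriv : (∫ x in Iic 0, ‖deriv u x‖ ^ 2) + ∫ x in Ioi 0, ‖deriv u x‖ ^ 2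
      = ∫ x, ‖deriv u x‖ ^ 2 := integral_Iic_add_Ioi hg.integrableOn hg.integrableOn
  have left := integral_Iic_norm_sq_div_sq_add_le hu_diff hm hc.le hg
  have right := integral_Ioi_norm_sq_div_sq_add_le hu_diff hm hc.le hg.integrableOn
  have loc_left := intervalIntegral_le_mul_integral_Ioo_div_sq_add
    (f := fun x => ‖u x‖ ^ 2) (hu_diff.continuous.norm.pow 2) (fun x => sq_nonneg ‖u x‖) hc le_rfl
    (by linarith) (by linarith : -(m / 2) ≤ m)
  have loc_right := intervalIntegral_le_mul_integral_Ioo_div_sq_add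
    (f := fun x => ‖u x‖ ^ 2) (hu_diff.continuous.norm.pow 2) (fun x => sq_nonneg ‖u x‖) hc
    (by linarith : -m ≤ m / 2) (by linarith) le_rfl
  rw [integral_eq_integral_Iic_add_integral_Ioo_add_integral_Ioi hF (by linarith : -m ≤ m)]
  set I := ∫ x in Ioo (-m) m, ‖u x‖ ^ 2 / (x ^ 2 + c)
  have hI : 0 ≤ I := setIntegral_nonneg measurableSet_Ioo fun x _ => by positivity
  have local_bound {J : ℝ} (hJ : J ≤ (m ^ 2 + c) * I) :
      8 / m ^ 2 * J ≤ (8 + 16 * π ^ 2 / R ^ 2) * I := by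
    have hm2 : m ^ 2 = R ^ 2 / 2 := by rw [div_pow, sq_sqrt zero_le_two]
    calc 8 / m ^ 2 * J ≤ 8 / m ^ 2 * ((m ^ 2 + c) * I) := by gcongr
      _ = (8 + 16 * c / R ^ 2) * I := by rw [hm2]; field_simp; ring
      _ ≤ (8 + 16 * π ^ 2 / R ^ 2) * I := by gcongr
  have hG : 0 ≤ ∫ x, ‖deriv u x‖ ^ 2 := integral_nonneg fun x => by positivity
  linear_combination left + right + local_bound loc_left + local_bound loc_right
    + 4 * hsplit_deriv + hI + 12 * hG

/-- One-dimensional splitting estimate from the proof of Theorem 7.1: for `H₀¹(ℝ)`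
functions `u` (in the `x` variable) and any `y ≠ y₀` in `(0, π)`,
`∫ |u|²/(x² + (y−y₀)²) ≤ 16 ∫ |u'|² + c₁₅ ∫_{−m}^{m} |u|²/(x² + (y−y₀)²)`. -/
theorem one_dim_splitting_estimate (y₀ : ℝ) (hy₀ : y₀ ∈ Set.Ioo 0 π)
    (R : ℝ) (hR : 0 < R) (hRlt : R < min y₀ (π - y₀))
    (y : ℝ) (hy : y ∈ Set.Ioo 0 π) (hyne : y ≠ y₀)
    (u : ℝ → ℂ)
    (hu_diff : Differentiable ℝ u)
    (hu_L2 : MemLp u 2 volume)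
    (hu_deriv_L2 : MemLp (deriv u) 2 volume) :
    ∫ x : ℝ, ‖u x‖ ^ 2 / (x ^ 2 + (y - y₀) ^ 2)
      ≤ 16 * (∫ x : ℝ, ‖deriv u x‖ ^ 2) +
        (18 + 32 * π ^ 2 / R ^ 2) *
          ∫ x in Set.Ioo (-(R / Real.sqrt 2)) (R / Real.sqrt 2),
            ‖u x‖ ^ 2 / (x ^ 2 + (y - y₀) ^ 2) :=
  one_dim_splitting_estimate_general y₀ hy₀ R hR y hy hyne u hu_diff hu_L2 hu_deriv_L2
end
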